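/- arXiv:2507.03413 — 2 statements merged into one kernel-verified Lean document; each statement's English description precedes it below -/
import Mathlib

section
/- The family of subsets A ⊆ ℕ that are B_h[g] sets for some integers h ≥ 2 and g ≥ 1 is a meager subset of the Cantor space 𝒫(ℕ). -/
/-!
For fixed `h` and `g`, being a `B_h[g]` set is the conjunction over `x` of the conditions
`repCount A h x ≤ g`, each of which only depends on `A ∩ [0, x]`; so the `B_h[g]` sets form a
closed subset of the Cantor space. When `h ≥ 2` it has empty interior: every cylinder contains a
set with a full tail `[N, ∞)`, and such a set has more than `g` representations of `h N + 2g`.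
The family in question is a countable union of these closed nowhere dense sets.
-/

open Filter Topology Set
open scoped ENNReal

/-- Number of unordered representations of `x` as a sum of `h` elements of `A`
(repetitions allowed): multisets of size `h` with elements in `A` summing to `x`. -/
noncomputable def repCount {X : Type*} [AddCommMonoid X] (A : Set X) (h : ℕ) (x : X) : ℕ :=
  Nat.card {s : Multiset X // Multiset.card s = h ∧ (∀ a ∈ s, a ∈ A) ∧ s.sum = x}

/-- `A` is a `B_h[g]` set: every `x` has at most `g` unordered representations. -/
def IsBhg {X : Type*} [AddCommMonoid X] (A : Set X) (h g : ℕ) : Prop :=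
  ∀ x, repCount A h x ≤ g

/-- `A ⊆ ℕ` is a Sidon set. -/
def IsSidonSet (A : Set ℕ) : Prop :=
  ∀ a b c d, a ∈ A → b ∈ A → c ∈ A → d ∈ A → a ≤ b → c ≤ d → a + b = c + d → a = c ∧ b = d

/-- Lower asymptotic density. -/
noncomputable def lowerDensity (S : Set ℕ) : ℝ :=
  Filter.liminf (fun n => ((S ∩ Set.Ico 0 n).ncard : ℝ) / n) Filter.atTop

/-- Upper asymptotic density. -/
noncomputable def upperDensity (S : Set ℕ) : ℝ :=
  Filter.limsup (fun n => ((S ∩ Set.Ico 0 n).ncard : ℝ) / n) Filter.atTop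

lemma finite_setOf_card_eq_sum_eq (h x : ℕ) :
    {s : Multiset ℕ | Multiset.card s = h ∧ s.sum = x}.Finite :=
  (((Finset.range (x + 1)).sym h).finite_toSet.image (↑)).subset
    fun s ⟨hcard, hsum⟩ => ⟨⟨s, hcard⟩, Finset.mem_sym_iff.2 fun _ ha =>
      Finset.mem_range.2 (Nat.lt_succ_of_le (hsum ▸ Multiset.le_sum_of_mem ha)), rfl⟩

lemma le_repCount_of_injective {A : Set ℕ} {h x n : ℕ} (m : Fin n → Multiset ℕ)
    (hinj : Function.Injective m)
    (hm : ∀ i, Multiset.card (m i) = h ∧ (∀ a ∈ m i, a ∈ A) ∧ (m i).sum = x) :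
    n ≤ repCount A h x := by
  have : Finite {s : Multiset ℕ // Multiset.card s = h ∧ (∀ a ∈ s, a ∈ A) ∧ s.sum = x} :=
    ((finite_setOf_card_eq_sum_eq h x).subset fun _ hs => ⟨hs.1, hs.2.2⟩).to_subtype
  simpa [repCount] using Nat.card_le_card_of_injective (fun i => ⟨m i, hm i⟩)
    fun i j hij => hinj (congrArg Subtype.val hij)

lemma repCount_congr {X : Type*} [AddCommMonoid X] [PartialOrder X] [CanonicallyOrderedAdd X]
    {A B : Set X} (h : ℕ) {x : X} (hAB : ∀ a ≤ x, a ∈ A ↔ a ∈ B) :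
    repCount A h x = repCount B h x :=
  Nat.card_congr <| Equiv.subtypeEquivRight fun _ =>
    ⟨fun ⟨hc, hA, hs⟩ => ⟨hc, fun a ha => (hAB a (hs ▸ Multiset.le_sum_of_mem ha)).1 (hA a ha), hs⟩,
     fun ⟨hc, hB, hs⟩ => ⟨hc, fun a ha => (hAB a (hs ▸ Multiset.le_sum_of_mem ha)).2 (hB a ha), hs⟩⟩

/-- With `A ⊇ [N, ∞)`, the multisets `{N + i, N + 2g - i} + {N, …, N}`, `0 ≤ i ≤ g`,
are `g + 1` representations of `h N + 2g`. -/
lemma not_isBhg_of_Ici_subset {A : Set ℕ} {N h : ℕ} (g : ℕ) (hh : 2 ≤ h) (hA : Ici N ⊆ A) :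
    ¬ IsBhg A h g := by
  obtain ⟨k, rfl⟩ := Nat.exists_eq_add_of_le' hh
  intro hB
  let m : Fin (g + 1) → Multiset ℕ := fun i => {N + i, N + 2 * g - i} + Multiset.replicate k N
  have hinj : Function.Injective m := by
    intro i j hij
    have hmem : N + (i : ℕ) ∈ ({N + j, N + 2 * g - j} : Multiset ℕ) := by
      rw [← add_right_cancel hij]
      simp
    have := i.is_le
    have := j.is_le
    simp only [Multiset.insert_eq_cons, Multiset.mem_cons, Multiset.mem_singleton] at hmem
    ext
    omega
  have hm : ∀ i, Multiset.card (m i) = k + 2 ∧ (∀ a ∈ m i, a ∈ A) ∧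
      (m i).sum = 2 * N + 2 * g + k * N := by
    intro i
    have := i.is_le
    refine ⟨by simp [m], fun a ha => hA ?_, ?_⟩
    · simp only [m, Multiset.insert_eq_cons, Multiset.mem_add, Multiset.mem_cons,
        Multiset.mem_singleton, Multiset.mem_replicate] at ha
      simp only [mem_Ici]
      omega
    · simp only [m, Multiset.insert_eq_cons, Multiset.sum_add, Multiset.sum_cons,
        Multiset.sum_singleton, Multiset.sum_replicate, smul_eq_mul]
      omega
  have := le_repCount_of_injective m hinj hm
  have := hB (2 * N + 2 * g + k * N)
  omega

lemma isLocallyConstant_repCount (h x : ℕ) :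
    IsLocallyConstant fun f : ℕ → Bool => repCount {n | f n = true} h x := by
  rw [IsLocallyConstant.iff_eventually_eq]
  intro f
  have hcoord : ∀ n ∈ Iic x, ∀ᶠ f' in 𝓝 f, f' n = f n := fun n _ =>
    tendsto_pure.1 (by simpa [nhds_discrete] using (continuous_apply n).tendsto f)
  filter_upwards [(eventually_all_finite (finite_Iic x)).2 hcoord] with f' hf'
  exact repCount_congr h fun a ha => by simp [hf' a ha]

lemma isClosed_setOf_isBhg (h g : ℕ) : IsClosed {f : ℕ → Bool | IsBhg {n | f n = true} h g} := by
  simp only [IsBhg, ofPred_forall]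
  exact isClosed_iInter fun x => isClosed_Iic.preimage (isLocallyConstant_repCount h x).continuous

lemma tendsto_ite_lt_atTop {β : Type*} [TopologicalSpace β] (f c : ℕ → β) :
    Tendsto (fun N n => if n < N then f n else c n) atTop (𝓝 f) :=
  tendsto_pi_nhds.2 fun n => tendsto_const_nhds.congr' <|
    (eventually_gt_atTop n).mono fun _ hN => (if_pos hN).symm

lemma dense_compl_setOf_isBhg {h : ℕ} (g : ℕ) (hh : 2 ≤ h) :
    Dense {f : ℕ → Bool | IsBhg {n | f n = true} h g}ᶜ := fun f =>
  mem_closure_of_tendsto (tendsto_ite_lt_atTop f fun _ => true) <| Eventually.of_forall fun N =>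
    not_isBhg_of_Ici_subset (N := N) g hh fun n hn => by simp [mem_Ici.1 hn]

lemma isMeagre_setOf_isBhg {h : ℕ} (g : ℕ) (hh : 2 ≤ h) :
    IsMeagre {f : ℕ → Bool | IsBhg {n | f n = true} h g} :=
  (isClosed_isNowhereDense_iff_compl.2
    ⟨(isClosed_setOf_isBhg h g).isOpen_compl, dense_compl_setOf_isBhg g hh⟩).2.isMeagre

theorem stmt4 :
    IsMeagre {f : ℕ → Bool | ∃ h, 2 ≤ h ∧ ∃ g, 1 ≤ g ∧ IsBhg {n | f n = true} h g} := by
  have hunion : {f : ℕ → Bool | ∃ h, 2 ≤ h ∧ ∃ g, 1 ≤ g ∧ IsBhg {n | f n = true} h g} ⊆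
      ⋃ (h) (_ : 2 ≤ h) (g), {f : ℕ → Bool | IsBhg {n | f n = true} h g} := by
    rintro f ⟨h, hh, g, -, hB⟩
    exact mem_iUnion₂.2 ⟨h, hh, mem_iUnion.2 ⟨g, hB⟩⟩
  exact (isMeagre_iUnion fun h => isMeagre_iUnion fun (hh : 2 ≤ h) =>
    isMeagre_iUnion fun g => isMeagre_setOf_isBhg g hh).mono hunion
end

section
/- Fix an integer h ≥ 2. The family of all sets A ⊆ ℕ with liminf_{n→∞} r_{A,h}(n) = 0 is a comeager subset of the Cantor space 𝒫(ℕ). -/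
open Filter Topology Set
open scoped ENNReal

/-!
Whether `r_{A,h}(n) = 0` depends only on `A ∩ [0, n]`, so for each `n` the sets `A` with
`r_{A,h}(n) = 0` form an open subset of the Cantor space. A finite set `A ⊆ [0, k]` has
`r_{A,h}(n) = 0` for all `n > hk`, and finite sets are dense; hence for every `N` the union over
`n ≥ N` of these open sets is dense open, and their countable intersection, the sets with
`r_{A,h}(n) = 0` infinitely often, is comeager.
-/

lemma repCount_congr_of_forall_le {A B : Set ℕ} {h n : ℕ} (hAB : ∀ m ≤ n, m ∈ A ↔ m ∈ B) :
    repCount A h n = repCount B h n := by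
  refine Nat.card_congr <| Equiv.subtypeEquivRight fun s => and_congr_right fun _ => ?_
  refine ⟨fun ⟨hA, hs⟩ => ⟨fun a ha => ?_, hs⟩, fun ⟨hB, hs⟩ => ⟨fun a ha => ?_, hs⟩⟩
  · exact (hAB a (hs ▸ Multiset.le_sum_of_mem ha)).1 (hA a ha)
  · exact (hAB a (hs ▸ Multiset.le_sum_of_mem ha)).2 (hB a ha)

lemma repCount_eq_zero_of_forall_le {A : Set ℕ} {h k n : ℕ} (hA : ∀ a ∈ A, a ≤ k)
    (hn : h * k < n) : repCount A h n = 0 := by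
  refine Nat.card_eq_zero.2 (Or.inl ⟨fun ⟨s, hcard, hsA, hsum⟩ => ?_⟩)
  have := Multiset.sum_le_card_nsmul s k fun a ha => hA a (hsA a ha)
  rw [hsum, hcard, smul_eq_mul] at this
  omega

lemma isOpen_of_forall_eq_on_Iic {X : Type*} [TopologicalSpace X] [DiscreteTopology X]
    {S : Set (ℕ → X)} (n : ℕ) (hS : ∀ f ∈ S, ∀ g : ℕ → X, (∀ m ≤ n, g m = f m) → g ∈ S) :
    IsOpen S := by
  refine isOpen_iff_forall_mem_open.2 fun f hf => ⟨(Iic n).pi fun i => {f i}, ?_, ?_, ?_⟩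
  · exact fun g hg => hS f hf g hg
  · exact isOpen_set_pi (finite_Iic n) fun _ _ => isOpen_discrete _
  · exact fun _ _ => rfl

lemma dense_setOf_eventually_eq {X : Type*} [TopologicalSpace X] (x₀ : X) :
    Dense {f : ℕ → X | ∀ᶠ m in atTop, f m = x₀} := by
  intro f
  let truncate : ℕ → ℕ → X := fun k m => if m < k then f m else x₀
  refine mem_closure_of_tendsto (f := truncate) (b := atTop) ?_ (Eventually.of_forall fun k => ?_)
  · refine tendsto_pi_nhds.2 fun m => tendsto_const_nhds.congr' ?_
    filter_upwards [eventually_gt_atTop m] with k hk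
    simp [truncate, hk]
  · filter_upwards [eventually_ge_atTop k] with m hm
    simp [truncate, not_lt.2 hm]

lemma eventually_residual_frequently_mem {X : Type*} [TopologicalSpace X] {S : ℕ → Set X}
    (hopen : ∀ n, IsOpen (S n)) (hdense : ∀ N, Dense (⋃ n ≥ N, S n)) :
    ∀ᶠ x in residual X, ∃ᶠ n in atTop, x ∈ S n := by
  have hres : ∀ N, ∀ᶠ x in residual X, x ∈ ⋃ n ≥ N, S n := fun N =>
    residual_of_dense_open (isOpen_biUnion fun n _ => hopen n) (hdense N)
  filter_upwards [eventually_countable_forall.2 hres] with x hx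
  simpa only [frequently_atTop, mem_iUnion, exists_prop] using hx

theorem stmt8_general (h : ℕ) :
    {f : ℕ → Bool |
      Filter.liminf (fun n => (repCount {m | f m = true} h n : ℝ≥0∞)) Filter.atTop = 0}
      ∈ residual (ℕ → Bool) := by
  let S : ℕ → Set (ℕ → Bool) := fun n => {f | repCount {m | f m = true} h n = 0}
  have hopen : ∀ n, IsOpen (S n) := fun n => isOpen_of_forall_eq_on_Iic n fun f hf g hg =>
    (repCount_congr_of_forall_le fun m hm => by simp [hg m hm]).trans hf
  have hdense : ∀ N, Dense (⋃ n ≥ N, S n) := by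
    refine fun N => (dense_setOf_eventually_eq false).mono fun f hf => ?_
    obtain ⟨k, hk⟩ := eventually_atTop.1 hf
    have hbound : ∀ a ∈ {m | f m = true}, a ≤ k := fun a ha =>
      not_lt.1 fun hka => by simp [hk a hka.le] at ha
    exact mem_biUnion (x := N + h * k + 1) (by omega : N ≤ N + h * k + 1)
      (repCount_eq_zero_of_forall_le hbound (by omega))
  filter_upwards [eventually_residual_frequently_mem hopen hdense] with f hf
  refine le_antisymm (liminf_le_of_frequently_le' (hf.mono fun n hn => ?_)) zero_le
  simp [show repCount {m | f m = true} h n = 0 from hn]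

theorem stmt8 (h : ℕ) (hh : 2 ≤ h) :
    {f : ℕ → Bool |
      Filter.liminf (fun n => (repCount {m | f m = true} h n : ℝ≥0∞)) Filter.atTop = 0}
      ∈ residual (ℕ → Bool) :=
  stmt8_general h
end
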